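/- arXiv:2006.08277 — 3 statements merged into one kernel-verified Lean document; each statement's English description precedes it below -/
import Mathlib

section
/- If E is an equivalence relation on Cantor space 2^ℕ that, as a subset of 2^ℕ × 2^ℕ, has the Baire property and is non-meager, then E is not disjoint from G₀; that is, there exist distinct E-equivalent points x, y with (x, y) ∈ G₀. -/
open Filter Topology

/-- Concatenation of a finite binary string with a point of Cantor space. -/
def cat01 (l : List Bool) (c : ℕ → Bool) : ℕ → Bool :=
  fun k => if h : k < l.length then l.get ⟨k, h⟩ else c (k - l.length)

/-- The digraph `G₀` on Cantor space determined by the sequence of strings `s`. -/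
def G0 (s : ℕ → List Bool) : Set ((ℕ → Bool) × (ℕ → Bool)) :=
  {p | ∃ n : ℕ, ∃ c : ℕ → Bool,
    p = (cat01 (s n ++ [false]) c, cat01 (s n ++ [true]) c)}

/-!
A non-meager set with the Baire property is comeager in a nonempty open box `A × B`, and
`A` may be taken to be a basic cylinder `N_u`. By density of `(s_n)`, some `s_n` extends `u`,
so `c ↦ s_n ⌢ i ⌢ c` maps Cantor space into `N_u` for both `i`. These maps are continuous and
open, so pulling back the meager set `(A × B) \ E` along `(c, y) ↦ (s_n ⌢ i ⌢ c, y)` for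
`i = 0, 1` yields a point `(c, y)` with `y ∈ B` avoiding both preimages; then
`s_n ⌢ 0 ⌢ c E y E s_n ⌢ 1 ⌢ c`.
-/

open Set PiNat

section Baire

variable {X : Type*} [TopologicalSpace X]

theorem exists_isOpen_nonempty_isMeagre_diff {S : Set X}
    (hBP : ∃ U : Set X, IsOpen U ∧ IsMeagre (symmDiff S U)) (hS : ¬ IsMeagre S) :
    ∃ U : Set X, IsOpen U ∧ U.Nonempty ∧ IsMeagre (U \ S) := by
  obtain ⟨U, hUo, hSU⟩ := hBP
  refine ⟨U, hUo, nonempty_iff_ne_empty.2 fun hU => hS ?_, hSU.mono ?_⟩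
  · simpa [hU, symmDiff_def] using hSU
  · exact fun p hp => Or.inr hp

variable {Y Z : Type*} [TopologicalSpace Y] [TopologicalSpace Z]

theorem IsMeagre.exists_notMem_of_isOpenMap [BaireSpace (X × Y)] [Nonempty X]
    {M : Set (Z × Y)} (hM : IsMeagre M) {f g : X → Z}
    (hfc : Continuous f) (hfo : IsOpenMap f) (hgc : Continuous g) (hgo : IsOpenMap g)
    {V : Set Y} (hVo : IsOpen V) (hV : V.Nonempty) :
    ∃ x, ∃ y ∈ V, (f x, y) ∉ M ∧ (g x, y) ∉ M := by
  have hpull : ∀ h : X → Z, Continuous h → IsOpenMap h →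
      IsMeagre (Prod.map h id ⁻¹' M) := fun h hc ho =>
    hM.preimage_of_isOpenMap (hc.prodMap continuous_id) (ho.prodMap IsOpenMap.id)
  have hdense : Dense (Prod.map f id ⁻¹' M ∪ Prod.map g id ⁻¹' M)ᶜ :=
    dense_of_mem_residual ((hpull f hfc hfo).union (hpull g hgc hgo))
  obtain ⟨⟨x, y⟩, ⟨-, hy⟩, hxy⟩ :=
    hdense.inter_open_nonempty _ (isOpen_univ.prod hVo) (univ_nonempty.prod hV)
  simp only [mem_compl_iff, mem_union, not_or] at hxy
  exact ⟨x, y, hy, hxy⟩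

end Baire

section Concatenation

variable (l : List Bool) (c : ℕ → Bool)

theorem cat01_apply_of_lt {k : ℕ} (hk : k < l.length) : cat01 l c k = l[k] := by
  simp [cat01, hk]

@[simp]
theorem cat01_apply_add_length (k : ℕ) : cat01 l c (k + l.length) = c k := by
  simp [cat01]

theorem cat01_append_false_ne_append_true :
    cat01 (l ++ [false]) c ≠ cat01 (l ++ [true]) c := fun h => by
  simpa [cat01_apply_of_lt] using congrFun h l.length

theorem cat01_mem_cylinder {x : ℕ → Bool} {m : ℕ} (h : List.ofFn (fun i : Fin m => x i) <+: l) :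
    cat01 l c ∈ cylinder x m := fun i hi => by
  have hil : i < l.length := hi.trans_le (by simpa using h.length_le)
  rw [cat01_apply_of_lt l c hil, ← h.getElem (by simpa using hi), List.getElem_ofFn]

theorem continuous_cat01 : Continuous (cat01 l) :=
  continuous_pi fun k => by
    by_cases hk : k < l.length
    · simpa only [cat01, dif_pos hk] using continuous_const
    · simpa only [cat01, dif_neg hk] using continuous_apply (k - l.length)

theorem range_cat01 : range (cat01 l) = cylinder (cat01 l c) l.length := by
  refine subset_antisymm (fun _ ⟨d, hd⟩ i hi => ?_) fun x hx => ⟨fun k => x (k + l.length), ?_⟩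
  · simp [← hd, cat01_apply_of_lt _ _ hi]
  · funext k
    by_cases hk : k < l.length
    · simp [hx k hk, cat01_apply_of_lt _ _ hk]
    · simp [cat01, hk, Nat.sub_add_cancel (Nat.le_of_not_lt hk)]

theorem isOpenMap_cat01 : IsOpenMap (cat01 l) :=
  have hinj : Function.Injective (cat01 l) := fun c d h =>
    funext fun k => by simpa using congrFun h (k + l.length)
  ((continuous_cat01 l).isClosedEmbedding hinj).isInducing.isOpenMap <| by
    rw [range_cat01 l (fun _ => false)]
    exact isOpen_cylinder _ _ _

end Concatenation

theorem stmt_1_general (s : ℕ → List Bool)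
    (hdense : ∀ l : List Bool, ∃ n, l <+: s n)
    (E : (ℕ → Bool) → (ℕ → Bool) → Prop) (hE : Equivalence E)
    (hBP : ∃ U : Set ((ℕ → Bool) × (ℕ → Bool)), IsOpen U ∧
      IsMeagre (symmDiff {p : (ℕ → Bool) × (ℕ → Bool) | E p.1 p.2} U))
    (hnm : ¬ IsMeagre {p : (ℕ → Bool) × (ℕ → Bool) | E p.1 p.2}) :
    ∃ x y : ℕ → Bool, x ≠ y ∧ E x y ∧ (x, y) ∈ G0 s := by
  obtain ⟨U, hUo, ⟨⟨a, b⟩, hab⟩, hU⟩ := exists_isOpen_nonempty_isMeagre_diff hBP hnm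
  obtain ⟨A, B, hAo, hBo, ha, hb, hAB⟩ := isOpen_prod_iff.1 hUo a b hab
  obtain ⟨-, ⟨x, m, rfl⟩, -, hxA⟩ :=
    (isTopologicalBasis_cylinders _).exists_subset_of_mem_open ha hAo
  obtain ⟨n, hn⟩ := hdense (List.ofFn fun i : Fin m => x i)
  have hM : IsMeagre ((cylinder x m ×ˢ B) \ {p | E p.1 p.2}) :=
    hU.mono (sdiff_subset_sdiff_left ((prod_mono hxA subset_rfl).trans hAB))
  obtain ⟨c, y, hy, h0, h1⟩ := hM.exists_notMem_of_isOpenMap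
    (continuous_cat01 _) (isOpenMap_cat01 _) (continuous_cat01 _) (isOpenMap_cat01 _) hBo ⟨b, hb⟩
  have hEy : ∀ i : Bool, (cat01 (s n ++ [i]) c, y) ∉ (cylinder x m ×ˢ B) \ {p | E p.1 p.2} →
      E (cat01 (s n ++ [i]) c) y := fun i hi => by
    by_contra hne
    exact hi ⟨⟨cat01_mem_cylinder _ c (hn.trans (List.prefix_append _ _)), hy⟩, hne⟩
  exact ⟨_, _, cat01_append_false_ne_append_true (s n) c,
    hE.trans (hEy false h0) (hE.symm (hEy true h1)), n, c, rfl⟩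

/-- A non-meager equivalence relation on Cantor space with the Baire property
is not disjoint from `G₀`. -/
theorem stmt_1 (s : ℕ → List Bool)
    (hlen : ∀ n, (s n).length = n)
    (hdense : ∀ l : List Bool, ∃ n, l <+: s n)
    (E : (ℕ → Bool) → (ℕ → Bool) → Prop) (hE : Equivalence E)
    (hBP : ∃ U : Set ((ℕ → Bool) × (ℕ → Bool)), IsOpen U ∧
      IsMeagre (symmDiff {p : (ℕ → Bool) × (ℕ → Bool) | E p.1 p.2} U))
    (hnm : ¬ IsMeagre {p : (ℕ → Bool) × (ℕ → Bool) | E p.1 p.2}) :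
    ∃ x y : ℕ → Bool, x ≠ y ∧ E x y ∧ (x, y) ∈ G0 s :=
  stmt_1_general s hdense E hE hBP hnm
end

section
/- Every Li–Yorke chaotic analytic dynamical system admits a scrambled Cantor set: if (X, f) is a dynamical system on an analytic metric space X with an uncountable scrambled set, then there is a Cantor set C ⊆ X that is scrambled. -/
open Filter Topology

/-- `x` and `y` are proximal under `f`. -/
def Proximal {X : Type*} [MetricSpace X] (f : X → X) (x y : X) : Prop :=
  Filter.liminf (fun n => edist (f^[n] x) (f^[n] y)) Filter.atTop = 0

/-- `x` and `y` are asymptotic under `f`. -/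
def Asymptotic {X : Type*} [MetricSpace X] (f : X → X) (x y : X) : Prop :=
  Filter.limsup (fun n => edist (f^[n] x) (f^[n] y)) Filter.atTop = 0

/-- A set is scrambled if all pairs of distinct points in it are Li–Yorke. -/
def Scrambled {X : Type*} [MetricSpace X] (f : X → X) (Y : Set X) : Prop :=
  ∀ x ∈ Y, ∀ y ∈ Y, x ≠ y → Proximal f x y ∧ ¬ Asymptotic f x y

/-!
Lift the scrambled set along the parametrisation `ℕ^ℕ ⊇ C → X` to an uncountable set `T` in a
Polish space. The Li–Yorke relation is not `G_δ`, so Mycielski's theorem does not apply as it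
stands; but the asymptotic distance `D a b = limsup d(fⁿ a, fⁿ b)` is a pseudometric, and for
each `δ > 0` the proximal pairs with `D ≥ δ` do form a `G_δ` set. We build a Cantor scheme of
uncountable subsets of `T`. Each set is split into two uncountable pieces at `D`-distance
`> δ` for some `δ > 0`: either `D` has two condensation points in it, or a `δ`-separated
uncountable subset exists by Zorn's lemma and is split by topological condensation points.
Then, for every pair of pieces of level `n`, both are shrunk around condensation points so that
the product of their closures lies in the `n`-th open approximation of the `G_δ` set for their
own `δ`. The branches of the scheme give a continuous injection of the Cantor space whose
image is scrambled.
-/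

open Set
open scoped ENNReal

section Condensation

variable {α : Type*} [TopologicalSpace α]

def IsCondensationPt (s : Set α) (a : α) : Prop := ∀ U ∈ 𝓝 a, ¬ (s ∩ U).Countable

theorem countable_diff_setOf_isCondensationPt [SecondCountableTopology α] (s : Set α) :
    (s \ {a | IsCondensationPt s a}).Countable := by
  have hB := TopologicalSpace.isBasis_countableBasis α
  have hB' : {U ∈ TopologicalSpace.countableBasis α | (s ∩ U).Countable}.Countable :=
    (TopologicalSpace.countable_countableBasis α).mono (sep_subset _ _)
  refine (hB'.biUnion fun U hU => hU.2).mono ?_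
  rintro a ⟨has, ha⟩
  simp only [IsCondensationPt, mem_ofPred_eq, not_forall, not_not] at ha
  obtain ⟨U, hU, hsU⟩ := ha
  obtain ⟨V, hV, haV, hVU⟩ := hB.mem_nhds_iff.mp hU
  exact mem_biUnion ⟨hV, hsU.mono (inter_subset_inter_right s hVU)⟩ ⟨has, haV⟩

theorem nontrivial_inter_setOf_isCondensationPt [SecondCountableTopology α] {s : Set α}
    (hs : ¬ s.Countable) : (s ∩ {a | IsCondensationPt s a}).Nontrivial := by
  refine Infinite.nontrivial fun hfin => hs ?_
  rw [← sdiff_union_inter s {a | IsCondensationPt s a}]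
  exact (countable_diff_setOf_isCondensationPt s).union hfin.countable

theorem IsCondensationPt.exists_subset_closure_subset [RegularSpace α] {s U : Set α} {a : α}
    (ha : IsCondensationPt s a) (hU : U ∈ 𝓝 a) : ∃ t ⊆ s, ¬ t.Countable ∧ closure t ⊆ U := by
  obtain ⟨K, hK, hKc, hKU⟩ := exists_mem_nhds_isClosed_subset hU
  exact ⟨s ∩ K, inter_subset_left, ha K hK, (closure_minimal inter_subset_right hKc).trans hKU⟩

theorem exists_subsets_closure_prod_subset [RegularSpace α] [SecondCountableTopology α]
    {s t : Set α} (hs : ¬ s.Countable) (ht : ¬ t.Countable) {W : Set (α × α)} (hW : IsOpen W)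
    (hst : s ×ˢ t ⊆ W) :
    ∃ s' ⊆ s, ∃ t' ⊆ t, ¬ s'.Countable ∧ ¬ t'.Countable ∧ closure s' ×ˢ closure t' ⊆ W := by
  obtain ⟨a, has, ha⟩ := (nontrivial_inter_setOf_isCondensationPt hs).nonempty
  obtain ⟨b, hbt, hb⟩ := (nontrivial_inter_setOf_isCondensationPt ht).nonempty
  have hWab : W ∈ 𝓝 a ×ˢ 𝓝 b := by
    rw [← nhds_prod_eq]; exact hW.mem_nhds (hst ⟨has, hbt⟩)
  obtain ⟨U, hU, V, hV, hUV⟩ := mem_prod_iff.mp hWab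
  obtain ⟨s', hs's, hs', hs'U⟩ := IsCondensationPt.exists_subset_closure_subset ha hU
  obtain ⟨t', ht't, ht', ht'V⟩ := IsCondensationPt.exists_subset_closure_subset hb hV
  exact ⟨s', hs's, t', ht't, hs', ht', (Set.prod_mono hs'U ht'V).trans hUV⟩

theorem exists_subsets_closure_prod_subset_of_finset [RegularSpace α] [SecondCountableTopology α]
    {ι : Type*} [DecidableEq ι] {A : ι → Set α} (hA : ∀ i, ¬ (A i).Countable)
    {W : ι → ι → Set (α × α)} (hW : ∀ i j, IsOpen (W i j)) (F : Finset (ι × ι))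
    (hF : ∀ p ∈ F, p.1 ≠ p.2) (hAW : ∀ p ∈ F, A p.1 ×ˢ A p.2 ⊆ W p.1 p.2) :
    ∃ A' : ι → Set α, (∀ i, A' i ⊆ A i) ∧ (∀ i, ¬ (A' i).Countable) ∧
      ∀ p ∈ F, closure (A' p.1) ×ˢ closure (A' p.2) ⊆ W p.1 p.2 := by
  induction F using Finset.induction_on generalizing A with
  | empty => exact ⟨A, fun i => subset_rfl, hA, by simp⟩
  | @insert p F _ ih =>
    obtain ⟨i, j⟩ := p
    have hij : i ≠ j := hF _ (Finset.mem_insert_self _ F)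
    obtain ⟨s, hsA, t, htA, hs, ht, hst⟩ := exists_subsets_closure_prod_subset (hA i) (hA j)
      (hW i j) (hAW _ (Finset.mem_insert_self _ F))
    set A₁ := Function.update (Function.update A i s) j t
    have hA₁i : A₁ i = s := by simp [A₁, hij]
    have hA₁j : A₁ j = t := by simp [A₁]
    have hA₁ : ∀ k, A₁ k ⊆ A k ∧ ¬ (A₁ k).Countable := by
      intro k
      by_cases hkj : k = j
      · subst hkj; rw [hA₁j]; exact ⟨htA, ht⟩
      by_cases hki : k = i
      · subst hki; rw [hA₁i]; exact ⟨hsA, hs⟩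
      simpa [A₁, hki, hkj] using hA k
    obtain ⟨A', hA'A₁, hA', hA'W⟩ := ih (fun k => (hA₁ k).2)
      (fun p hp => hF p (Finset.mem_insert_of_mem hp)) fun p hp =>
        (Set.prod_mono (hA₁ _).1 (hA₁ _).1).trans (hAW p (Finset.mem_insert_of_mem hp))
    refine ⟨A', fun k => (hA'A₁ k).trans (hA₁ k).1, hA', ?_⟩
    rintro p hp
    rcases Finset.mem_insert.mp hp with rfl | hp
    · refine (Set.prod_mono (closure_mono (hA'A₁ i)) (closure_mono (hA'A₁ j))).trans ?_
      rwa [hA₁i, hA₁j]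
    · exact hA'W p hp

end Condensation

theorem exists_subset_not_countable_ediam_le {α : Type*} [PseudoEMetricSpace α]
    [SecondCountableTopology α] {s : Set α} (hs : ¬ s.Countable) {η : ℝ≥0∞} (hη : 0 < η) :
    ∃ t ⊆ s, ¬ t.Countable ∧ Metric.ediam t ≤ η := by
  obtain ⟨a, -, ha⟩ := (nontrivial_inter_setOf_isCondensationPt hs).nonempty
  refine ⟨s ∩ Metric.closedEBall a (η / 2), inter_subset_left,
    ha _ (Metric.closedEBall_mem_nhds a (ENNReal.half_pos hη.ne')), ?_⟩
  calc Metric.ediam (s ∩ Metric.closedEBall a (η / 2))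
      ≤ 2 * (η / 2) := (Metric.ediam_mono inter_subset_right).trans Metric.ediam_closedEBall_le
    _ = η := ENNReal.mul_div_cancel two_ne_zero ENNReal.ofNat_ne_top

section SeparatedSplit

variable {Z : Type*} (D : Z → Z → ℝ≥0∞)

def HasSeparatedSplit (A : Set Z) : Prop :=
  ∃ ε > 0, ∃ B₀ ⊆ A, ∃ B₁ ⊆ A, ¬ B₀.Countable ∧ ¬ B₁.Countable ∧ ∀ x ∈ B₀, ∀ y ∈ B₁, ε < D x y

variable {D}

theorem HasSeparatedSplit.mono {A A' : Set Z} (h : HasSeparatedSplit D A) (hA : A ⊆ A') :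
    HasSeparatedSplit D A' := by
  obtain ⟨ε, hε, B₀, hB₀, B₁, hB₁, h⟩ := h
  exact ⟨ε, hε, B₀, hB₀.trans hA, B₁, hB₁.trans hA, h⟩

theorem hasSeparatedSplit_of_condensing (hD_comm : ∀ a b, D a b = D b a)
    (hD_tri : ∀ a b c, D a c ≤ D a b + D b c) {A : Set Z} {a₀ a₁ : Z} (h₀₁ : 0 < D a₀ a₁)
    (h₀ : ∀ q > 0, ¬ {b ∈ A | D a₀ b < q}.Countable)
    (h₁ : ∀ q > 0, ¬ {b ∈ A | D a₁ b < q}.Countable) : HasSeparatedSplit D A := by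
  set ε := min (D a₀ a₁) 1 / 3
  have hε : 0 < ε := ENNReal.div_pos (lt_min h₀₁ one_pos).ne' ENNReal.ofNat_ne_top
  have hεtop : ε ≠ ⊤ := ENNReal.div_ne_top (min_le_right _ _ |>.trans_lt ENNReal.one_lt_top).ne
    three_ne_zero
  refine ⟨ε, hε, _, sep_subset A _, _, sep_subset A _, h₀ ε hε, h₁ ε hε, ?_⟩
  rintro x ⟨-, hx⟩ y ⟨-, hy⟩
  by_contra! hxy
  have : D a₀ a₁ < ε + ε + ε :=
    calc D a₀ a₁ ≤ D a₀ x + D x y + D y a₁ :=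
          (hD_tri _ y _).trans (add_le_add_left (hD_tri _ x _) _)
      _ < ε + ε + ε := by
          rw [hD_comm y]
          exact ENNReal.add_lt_add
            (ENNReal.add_lt_add_of_lt_of_le (ne_top_of_le_ne_top hεtop hxy) hx hxy) hy
  rw [ENNReal.add_thirds] at this
  exact (min_le_left _ _).not_gt this

theorem exists_pairwise_le_of_countable_balls (hD_comm : ∀ a b, D a b = D b a) {A : Set Z}
    (hA : ¬ A.Countable) {r : ℝ≥0∞} (hr : ∀ a ∈ A, {b ∈ A | D a b < r}.Countable) :
    ∃ M ⊆ A, ¬ M.Countable ∧ M.Pairwise fun x y => r ≤ D x y := by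
  obtain ⟨M, hM⟩ := zorn_subset {M | M ⊆ A ∧ M.Pairwise fun x y => r ≤ D x y}
    fun c hc hchain => ⟨⋃₀ c, ⟨sUnion_subset fun s hs => (hc hs).1,
      hchain.pairwise_sUnion.mpr fun s hs => (hc hs).2⟩, fun s hs => subset_sUnion_of_mem hs⟩
  refine ⟨M, hM.prop.1, fun hMc => hA ?_, hM.prop.2⟩
  refine ((hMc.biUnion fun x hx => hr x (hM.prop.1 hx)).union hMc).mono fun a ha => ?_
  by_cases haM : a ∈ M
  · exact Or.inr haM
  obtain ⟨x, hxM, -, hxa⟩ : ∃ x ∈ M, a ≠ x ∧ D a x < r := by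
    by_contra! h
    refine haM (hM.2 ⟨insert_subset ha hM.prop.1, pairwise_insert.mpr ⟨hM.prop.2, ?_⟩⟩
      (subset_insert a M) (mem_insert a M))
    exact fun x hx hax => ⟨h x hx hax, hD_comm a x ▸ h x hx hax⟩
  exact Or.inl (mem_biUnion hxM ⟨ha, hD_comm x a ▸ hxa⟩)

theorem hasSeparatedSplit_of_pairwise_le [TopologicalSpace Z] [T2Space Z]
    [SecondCountableTopology Z] {M : Set Z} (hM : ¬ M.Countable) {r : ℝ≥0∞} (hr : 0 < r)
    (hMr : M.Pairwise fun x y => r ≤ D x y) : HasSeparatedSplit D M := by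
  obtain ⟨p, ⟨-, hp⟩, q, ⟨-, hq⟩, hpq⟩ := nontrivial_inter_setOf_isCondensationPt hM
  obtain ⟨U, V, hU, hV, hpU, hqV, hUV⟩ := t2_separation hpq
  obtain ⟨ε, hε, hεr⟩ := exists_between hr
  refine ⟨ε, hε, M ∩ U, inter_subset_left, M ∩ V, inter_subset_left, hp U (hU.mem_nhds hpU),
    hq V (hV.mem_nhds hqV), fun x hx y hy => hεr.trans_le (hMr hx.1 hy.1 ?_)⟩
  rintro rfl
  exact hUV.ne_of_mem hx.2 hy.2 rfl

theorem hasSeparatedSplit_of_not_countable [TopologicalSpace Z] [T2Space Z]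
    [SecondCountableTopology Z]
    (hD_comm : ∀ a b, D a b = D b a) (hD_tri : ∀ a b c, D a c ≤ D a b + D b c) {A : Set Z}
    (hA : ¬ A.Countable) (hD_pos : ∀ a ∈ A, ∀ b ∈ A, a ≠ b → 0 < D a b) :
    HasSeparatedSplit D A := by
  -- Either some `A' k` is uncountable and contains a `k⁻¹`-separated uncountable set, or all
  -- but countably many points of `A` are condensation points for `D`.
  set A' : ℕ → Set Z := fun k => {a ∈ A | {b ∈ A | D a b < (k : ℝ≥0∞)⁻¹}.Countable}
  by_cases hk : ∃ k, ¬ (A' k).Countable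
  · obtain ⟨k, hk⟩ := hk
    obtain ⟨M, hMA, hM, hMr⟩ := exists_pairwise_le_of_countable_balls hD_comm hk
      fun a ha => ha.2.mono fun b hb => by exact ⟨hb.1.1, hb.2⟩
    exact (hasSeparatedSplit_of_pairwise_le hM (ENNReal.inv_pos.mpr (ENNReal.natCast_ne_top k))
      hMr).mono (hMA.trans (sep_subset _ _))
  push Not at hk
  have hcond : ¬ (A \ ⋃ k, A' k).Countable := fun h =>
    hA ((h.union (countable_iUnion hk)).mono (by rw [sdiff_union_self]; exact subset_union_left))
  obtain ⟨a₀, ha₀, a₁, ha₁, hne⟩ := Infinite.nontrivial fun h => hcond h.countable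
  have hball : ∀ a ∈ A \ ⋃ k, A' k, ∀ q > 0, ¬ {b ∈ A | D a b < q}.Countable := by
    intro a ha q hq hcount
    obtain ⟨k, hkq⟩ := ENNReal.exists_inv_nat_lt hq.ne'
    exact ha.2 (mem_iUnion.mpr ⟨k, ha.1, hcount.mono fun b hb => by exact ⟨hb.1, hb.2.trans hkq⟩⟩)
  exact hasSeparatedSplit_of_condensing hD_comm hD_tri (hD_pos _ ha₀.1 _ ha₁.1 hne)
    (hball a₀ ha₀) (hball a₁ ha₁)

end SeparatedSplit

theorem exists_seq_of_forall_exists_succ {α : ℕ → Type*} {P : ∀ n, α n → Prop}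
    {R : ∀ n, α n → α (n + 1) → Prop} (h₀ : ∃ x, P 0 x)
    (h : ∀ n x, P n x → ∃ y, P (n + 1) y ∧ R n x y) :
    ∃ s : ∀ n, α n, ∀ n, P n (s n) ∧ R n (s n) (s (n + 1)) := by
  choose x₀ hx₀ using h₀
  choose next hnext using h
  let s : ∀ n, {x : α n // P n x} := fun n => Nat.rec (motive := fun n => {x : α n // P n x})
    ⟨x₀, hx₀⟩ (fun n x => ⟨next n x.1 x.2, (hnext n x.1 x.2).1⟩) n
  exact ⟨fun n => (s n).1, fun n => ⟨(s n).2, (hnext n _ (s n).2).2⟩⟩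

def resVector {β : Type*} (x : ℕ → β) (n : ℕ) : List.Vector β n :=
  ⟨PiNat.res x n, PiNat.res_length x n⟩

theorem resVector_succ {β : Type*} (x : ℕ → β) (n : ℕ) :
    resVector x (n + 1) = x n ::ᵥ resVector x n :=
  Subtype.ext (PiNat.res_succ x n)

theorem resVector_ne_of_lt {β : Type*} {x y : ℕ → β} {k n : ℕ} (hk : x k ≠ y k) (hkn : k < n) :
    resVector x n ≠ resVector y n := fun h =>
  hk (PiNat.res_eq_res.mp (congrArg Subtype.val h) hkn)

theorem exists_continuous_forall_mem_closure {Z : Type*} [PseudoMetricSpace Z] [CompleteSpace Z]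
    {A : ∀ n, List.Vector Bool n → Set Z} (hA : ∀ n v, (A n v).Nonempty)
    (hA_diam : ∀ n v, Metric.ediam (A n v) ≤ (n : ℝ≥0∞)⁻¹)
    (hA_anti : ∀ n b v, A (n + 1) (b ::ᵥ v) ⊆ A n v) :
    ∃ c : (ℕ → Bool) → Z, Continuous c ∧ ∀ σ n, c σ ∈ closure (A n (resVector σ n)) := by
  let K : List Bool → Set Z := fun l => closure (A l.length ⟨l, rfl⟩)
  have hK : ∀ n (v : List.Vector Bool n), K v.toList = closure (A n v) := by
    rintro n ⟨l, rfl⟩; rfl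
  have hK_anti : CantorScheme.ClosureAntitone K := fun l b =>
    closure_closure.trans_subset (closure_mono (hA_anti l.length b ⟨l, rfl⟩))
  have hK_diam : CantorScheme.VanishingDiam K := by
    intro σ
    refine tendsto_of_tendsto_of_tendsto_of_le_of_le tendsto_const_nhds
      ENNReal.tendsto_inv_nat_nhds_zero (fun n => zero_le) fun n => ?_
    rw [show PiNat.res σ n = (resVector σ n).toList from rfl, hK, Metric.ediam_closure]
    exact hA_diam n _
  have hdom := hK_anti.map_of_vanishingDiam hK_diam fun l => (hA _ _).closure
  refine ⟨fun σ => (CantorScheme.inducedMap K).2 ⟨σ, hdom ▸ mem_univ σ⟩,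
    hK_diam.map_continuous.comp (continuous_id.subtype_mk _), fun σ n => ?_⟩
  rw [← hK]
  exact CantorScheme.map_mem _ n

section Fusion

variable {Z : Type*} [MetricSpace Z] {D : Z → Z → ℝ≥0∞} {W : ℕ → ℝ≥0∞ → Set (Z × Z)}
  {T : Set Z}

theorem exists_separated_split_ediam_le [SecondCountableTopology Z]
    (hD_comm : ∀ a b, D a b = D b a) (hD_tri : ∀ a b c, D a c ≤ D a b + D b c) {A : Set Z}
    (hA : ¬ A.Countable) (hD_pos : ∀ a ∈ A, ∀ b ∈ A, a ≠ b → 0 < D a b) {η : ℝ≥0∞}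
    (hη : 0 < η) :
    ∃ ε > 0, ∃ B : Bool → Set Z, (∀ i, B i ⊆ A) ∧ (∀ i, ¬ (B i).Countable) ∧
      (∀ i, Metric.ediam (B i) ≤ η) ∧ ∀ i j, i ≠ j → ∀ x ∈ B i, ∀ y ∈ B j, ε < D x y := by
  obtain ⟨ε, hε, B₀, hB₀A, B₁, hB₁A, hB₀, hB₁, hB₀₁⟩ :=
    hasSeparatedSplit_of_not_countable hD_comm hD_tri hA hD_pos
  obtain ⟨C₀, hC₀B, hC₀, hC₀η⟩ := exists_subset_not_countable_ediam_le hB₀ hη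
  obtain ⟨C₁, hC₁B, hC₁, hC₁η⟩ := exists_subset_not_countable_ediam_le hB₁ hη
  refine ⟨ε, hε, fun i => cond i C₁ C₀, fun i => ?_, fun i => ?_, fun i => ?_, ?_⟩
  · cases i
    exacts [hC₀B.trans hB₀A, hC₁B.trans hB₁A]
  · cases i <;> assumption
  · cases i <;> assumption
  · rintro (_ | _) (_ | _) hij x hx y hy
    · exact absurd rfl hij
    · exact hB₀₁ x (hC₀B hx) y (hC₁B hy)
    · exact hD_comm y x ▸ hB₀₁ y (hC₀B hy) x (hC₁B hx)
    · exact absurd rfl hij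

variable (D T) in
/-- A word `v` of length `n` lists the first `n` letters of a branch in reverse order, as
`PiNat.res` does, so the children of `v` are `b ::ᵥ v`; `δ v w` is the separation chosen where
the branches through `v` and `w` parted. -/
structure IsFusionPreStage (n : ℕ) (A : List.Vector Bool n → Set Z)
    (δ : List.Vector Bool n → List.Vector Bool n → ℝ≥0∞) : Prop where
  subset : ∀ v, A v ⊆ T
  not_countable : ∀ v, ¬ (A v).Countable
  ediam_le : ∀ v, Metric.ediam (A v) ≤ (n : ℝ≥0∞)⁻¹
  pos : ∀ v w, v ≠ w → 0 < δ v w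
  lt_dist : ∀ v w, v ≠ w → ∀ a ∈ A v, ∀ b ∈ A w, δ v w < D a b

variable (D W T) in
structure IsFusionStage (n : ℕ) (A : List.Vector Bool n → Set Z)
    (δ : List.Vector Bool n → List.Vector Bool n → ℝ≥0∞) : Prop
    extends IsFusionPreStage D T n A δ where
  closure_prod_subset : ∀ v w, v ≠ w → closure (A v) ×ˢ closure (A w) ⊆ W n (δ v w)

def IsFusionRefinement {n : ℕ} (A : List.Vector Bool n → Set Z)
    (δ : List.Vector Bool n → List.Vector Bool n → ℝ≥0∞) (A' : List.Vector Bool (n + 1) → Set Z)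
    (δ' : List.Vector Bool (n + 1) → List.Vector Bool (n + 1) → ℝ≥0∞) : Prop :=
  (∀ b v, A' (b ::ᵥ v) ⊆ A v) ∧ ∀ b b' v w, v ≠ w → δ' (b ::ᵥ v) (b' ::ᵥ w) = δ v w

theorem isFusionStage_zero (hT : ¬ T.Countable) :
    IsFusionStage D W T 0 (fun _ => T) (fun _ _ => 1) where
  subset _ := subset_rfl
  not_countable _ := hT
  ediam_le _ := by simp
  pos v w h := absurd (Subsingleton.elim v w) h
  lt_dist v w h := absurd (Subsingleton.elim v w) h
  closure_prod_subset v w h := absurd (Subsingleton.elim v w) h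

theorem IsFusionPreStage.exists_split [SecondCountableTopology Z]
    (hD_comm : ∀ a b, D a b = D b a) (hD_tri : ∀ a b c, D a c ≤ D a b + D b c)
    (hT_pos : ∀ a ∈ T, ∀ b ∈ T, a ≠ b → 0 < D a b) {n : ℕ} {A : List.Vector Bool n → Set Z}
    {δ : List.Vector Bool n → List.Vector Bool n → ℝ≥0∞} (h : IsFusionPreStage D T n A δ) :
    ∃ A' δ', IsFusionPreStage D T (n + 1) A' δ' ∧ IsFusionRefinement A δ A' δ' := by
  classical
  choose ε hε B hBA hB hB_diam hB_sep using fun v => exists_separated_split_ediam_le hD_comm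
    hD_tri (h.not_countable v) (fun a ha b hb => hT_pos a (h.subset v ha) b (h.subset v hb))
    (ENNReal.inv_pos.mpr (ENNReal.natCast_ne_top (n + 1)))
  let A' : List.Vector Bool (n + 1) → Set Z := fun v => B v.tail v.head
  let δ' : List.Vector Bool (n + 1) → List.Vector Bool (n + 1) → ℝ≥0∞ := fun v w =>
    if v.tail = w.tail then ε v.tail else δ v.tail w.tail
  have hA'A : ∀ v, A' v ⊆ A v.tail := fun v => hBA _ _
  refine ⟨A', δ', ⟨fun v => (hA'A v).trans (h.subset _), fun v => hB _ _,
    fun v => hB_diam _ _, fun v w hvw => ?_, fun v w hvw a ha b hb => ?_⟩,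
    fun b v => by simpa only [A', List.Vector.tail_cons] using hA'A (b ::ᵥ v),
    fun b b' v w hvw => by simp only [δ', List.Vector.tail_cons, if_neg hvw]⟩
  · by_cases htail : v.tail = w.tail
    · simpa only [δ', if_pos htail] using hε _
    · simpa only [δ', if_neg htail] using h.pos _ _ htail
  · by_cases htail : v.tail = w.tail
    · have hhead : v.head ≠ w.head := fun hhead => hvw <| by
        rw [← List.Vector.cons_head_tail v, ← List.Vector.cons_head_tail w, hhead, htail]
      simp only [δ', A', if_pos htail] at ha hb ⊢
      exact hB_sep _ _ _ hhead a ha b (htail ▸ hb)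
    · simpa only [δ', if_neg htail] using h.lt_dist _ _ htail a (hA'A v ha) b (hA'A w hb)

theorem IsFusionPreStage.exists_isFusionStage [SecondCountableTopology Z]
    (hW : ∀ n δ, IsOpen (W n δ)) (hTW : ∀ a ∈ T, ∀ b ∈ T, ∀ n δ, δ < D a b → (a, b) ∈ W n δ)
    {n : ℕ} {A : List.Vector Bool n → Set Z} {δ : List.Vector Bool n → List.Vector Bool n → ℝ≥0∞}
    (h : IsFusionPreStage D T n A δ) :
    ∃ A', (∀ v, A' v ⊆ A v) ∧ IsFusionStage D W T n A' δ := by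
  classical
  obtain ⟨A', hA'A, hA', hA'W⟩ := exists_subsets_closure_prod_subset_of_finset
    (A := A) h.not_countable (W := fun v w => W n (δ v w)) (fun _ _ => hW _ _)
    Finset.univ.offDiag (fun p hp => (Finset.mem_offDiag.mp hp).2.2) fun p hp x hx =>
      hTW _ (h.subset _ hx.1) _ (h.subset _ hx.2) _ _
        (h.lt_dist _ _ (Finset.mem_offDiag.mp hp).2.2 _ hx.1 _ hx.2)
  exact ⟨A', hA'A, ⟨fun v => (hA'A v).trans (h.subset v), hA',
    fun v => (Metric.ediam_mono (hA'A v)).trans (h.ediam_le v), h.pos,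
    fun v w hvw a ha b hb => h.lt_dist v w hvw a (hA'A v ha) b (hA'A w hb)⟩,
    fun v w hvw => hA'W (v, w) (by simpa using hvw)⟩

theorem IsFusionStage.exists_refinement [SecondCountableTopology Z]
    (hD_comm : ∀ a b, D a b = D b a) (hD_tri : ∀ a b c, D a c ≤ D a b + D b c)
    (hW : ∀ n δ, IsOpen (W n δ)) (hT_pos : ∀ a ∈ T, ∀ b ∈ T, a ≠ b → 0 < D a b)
    (hTW : ∀ a ∈ T, ∀ b ∈ T, ∀ n δ, δ < D a b → (a, b) ∈ W n δ) {n : ℕ}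
    {A : List.Vector Bool n → Set Z} {δ : List.Vector Bool n → List.Vector Bool n → ℝ≥0∞}
    (h : IsFusionStage D W T n A δ) :
    ∃ A' δ', IsFusionStage D W T (n + 1) A' δ' ∧ IsFusionRefinement A δ A' δ' := by
  obtain ⟨A₀, δ', h₀, hA₀, hδ'⟩ := h.exists_split hD_comm hD_tri hT_pos
  obtain ⟨A', hA'A₀, h'⟩ := h₀.exists_isFusionStage hW hTW
  exact ⟨A', δ', h', fun b v => (hA'A₀ _).trans (hA₀ b v), hδ'⟩

theorem exists_continuous_pairwise_eventually_mem [CompleteSpace Z] [SecondCountableTopology Z]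
    (hD_comm : ∀ a b, D a b = D b a) (hD_tri : ∀ a b c, D a c ≤ D a b + D b c)
    (hW : ∀ n δ, IsOpen (W n δ)) (hT : ¬ T.Countable)
    (hT_pos : ∀ a ∈ T, ∀ b ∈ T, a ≠ b → 0 < D a b)
    (hTW : ∀ a ∈ T, ∀ b ∈ T, ∀ n δ, δ < D a b → (a, b) ∈ W n δ) :
    ∃ c : (ℕ → Bool) → Z, Continuous c ∧
      Pairwise fun σ τ => ∃ δ > 0, ∀ᶠ n in atTop, (c σ, c τ) ∈ W n δ := by
  obtain ⟨S, hS⟩ := exists_seq_of_forall_exists_succ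
    (α := fun n =>
      (List.Vector Bool n → Set Z) × (List.Vector Bool n → List.Vector Bool n → ℝ≥0∞))
    (P := fun n S => IsFusionStage D W T n S.1 S.2)
    (R := fun _ S S' => IsFusionRefinement S.1 S.2 S'.1 S'.2)
    ⟨(fun _ => T, fun _ _ => 1), isFusionStage_zero hT⟩ fun n S hS => by
      obtain ⟨A', δ', h', hR⟩ := hS.exists_refinement hD_comm hD_tri hW hT_pos hTW
      exact ⟨(A', δ'), h', hR⟩
  obtain ⟨c, hc, hc_mem⟩ := exists_continuous_forall_mem_closure
    (fun n v => Set.Infinite.nonempty fun h => (hS n).1.not_countable v h.countable)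
    (fun n => (hS n).1.ediam_le) fun n => (hS n).2.1
  refine ⟨c, hc, fun σ τ hστ => ?_⟩
  obtain ⟨k, hk⟩ := Function.ne_iff.mp hστ
  have hne : ∀ n > k, resVector σ n ≠ resVector τ n := fun n hn => resVector_ne_of_lt hk hn
  have hδ : ∀ n > k, (S n).2 (resVector σ n) (resVector τ n) =
      (S (k + 1)).2 (resVector σ (k + 1)) (resVector τ (k + 1)) := by
    refine Nat.le_induction rfl fun n hn ih => ?_
    rw [resVector_succ, resVector_succ, (hS n).2.2 _ _ _ _ (hne n hn), ih]
  refine ⟨_, (hS (k + 1)).1.pos _ _ (hne _ k.lt_succ_self), eventually_atTop.mpr ⟨k + 1,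
    fun n hn => ?_⟩⟩
  rw [← hδ n hn]
  exact (hS n).1.closure_prod_subset _ _ (hne n hn) ⟨hc_mem σ n, hc_mem τ n⟩

end Fusion

theorem ENNReal.limsup_add_le_add_limsup (u v : ℕ → ℝ≥0∞) :
    limsup (u + v) atTop ≤ limsup u atTop + limsup v atTop := by
  simp only [limsup_eq_iInf_iSup_of_nat]
  rw [ENNReal.iInf_add_iInf fun i j => ⟨max i j, add_le_add
    (biSup_mono fun k hk => (le_max_left i j).trans hk)
    (biSup_mono fun k hk => (le_max_right i j).trans hk)⟩]
  exact iInf_mono fun n => iSup₂_le fun i hi => add_le_add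
    (le_iSup₂ (f := fun i (_ : i ≥ n) => u i) i hi) (le_iSup₂ (f := fun i (_ : i ≥ n) => v i) i hi)

section LiYorke

variable {Z X : Type*} [PseudoEMetricSpace X] (φ : ℕ → Z → X)

/-- For `φ n = f^[n] ∘ p` this unfolds to `Proximal f (p a) (p b) ∧ ¬ Asymptotic f (p a) (p b)`. -/
def IsLiYorkePair (a b : Z) : Prop :=
  liminf (fun n => edist (φ n a) (φ n b)) atTop = 0 ∧
    limsup (fun n => edist (φ n a) (φ n b)) atTop ≠ 0

noncomputable def limsupEdist (a b : Z) : ℝ≥0∞ :=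
  limsup (fun n => edist (φ n a) (φ n b)) atTop

/-- `⋂ n, liYorkeApprox φ n δ` is a `G_δ` set of proximal pairs whose distance exceeds `δ`
infinitely often; for `δ > 0` these are Li–Yorke pairs. -/
def liYorkeApprox (n : ℕ) (δ : ℝ≥0∞) : Set (Z × Z) :=
  {p | (∃ j ≥ n, edist (φ j p.1) (φ j p.2) < (n : ℝ≥0∞)⁻¹) ∧
    ∃ j ≥ n, δ < edist (φ j p.1) (φ j p.2)}

variable {φ}

theorem IsLiYorkePair.apply_ne {Y : Type*} {ψ : ℕ → Y → X} {p : Z → Y} {a b : Z}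
    (h : IsLiYorkePair (fun n => ψ n ∘ p) a b) : p a ≠ p b := fun hab =>
  h.2 (by simp [Function.comp_apply, hab])

theorem limsupEdist_self (a : Z) : limsupEdist φ a a = 0 := by
  simp [limsupEdist]

theorem limsupEdist_comm (a b : Z) : limsupEdist φ a b = limsupEdist φ b a := by
  simp only [limsupEdist, edist_comm]

theorem limsupEdist_triangle (a b c : Z) :
    limsupEdist φ a c ≤ limsupEdist φ a b + limsupEdist φ b c :=
  (limsup_le_limsup (Eventually.of_forall fun _ => edist_triangle _ _ _)).trans
    (ENNReal.limsup_add_le_add_limsup _ _)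

theorem isOpen_liYorkeApprox [TopologicalSpace Z] (hφ : ∀ n, Continuous (φ n)) (n : ℕ)
    (δ : ℝ≥0∞) : IsOpen (liYorkeApprox φ n δ) := by
  have hd : ∀ j, Continuous fun p : Z × Z => edist (φ j p.1) (φ j p.2) := fun j =>
    ((hφ j).comp continuous_fst).edist ((hφ j).comp continuous_snd)
  simp only [liYorkeApprox, ofPred_and, ofPred_exists]
  exact (isOpen_iUnion fun j => isOpen_const.inter (isOpen_lt (hd j) continuous_const)).inter
    (isOpen_iUnion fun j => isOpen_const.inter (isOpen_lt continuous_const (hd j)))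

theorem IsLiYorkePair.mem_liYorkeApprox {a b : Z} (h : IsLiYorkePair φ a b) {δ : ℝ≥0∞}
    (hδ : δ < limsupEdist φ a b) (n : ℕ) : (a, b) ∈ liYorkeApprox φ n δ :=
  ⟨(frequently_lt_of_liminf_lt (h := h.1 ▸ ENNReal.inv_pos.mpr (ENNReal.natCast_ne_top n)))
    |>.forall_exists_of_atTop n, (frequently_lt_of_lt_limsup (h := hδ)).forall_exists_of_atTop n⟩

theorem isLiYorkePair_of_eventually_mem {a b : Z} {δ : ℝ≥0∞} (hδ : 0 < δ)
    (h : ∀ᶠ n in atTop, (a, b) ∈ liYorkeApprox φ n δ) : IsLiYorkePair φ a b := by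
  refine ⟨le_antisymm (le_of_forall_gt fun ε hε => ?_) zero_le, (hδ.trans_le ?_).ne'⟩
  · obtain ⟨ε', hε', hε'ε⟩ := exists_between hε
    refine (liminf_le_of_frequently_le' (frequently_atTop.mpr fun N => ?_)).trans_lt hε'ε
    obtain ⟨n, ⟨⟨j, hjn, hj⟩, -⟩, hnN, hn⟩ := (h.and ((eventually_ge_atTop N).and
      (ENNReal.tendsto_inv_nat_nhds_zero.eventually (gt_mem_nhds hε')))).exists
    exact ⟨j, hnN.trans hjn, (hj.trans hn).le⟩
  · refine le_limsup_of_frequently_le' (frequently_atTop.mpr fun N => ?_)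
    obtain ⟨n, ⟨-, j, hjn, hj⟩, hnN⟩ := (h.and (eventually_ge_atTop N)).exists
    exact ⟨j, hnN.trans hjn, hj.le⟩

theorem exists_continuous_pairwise_isLiYorkePair [TopologicalSpace Z] [PolishSpace Z]
    (hφ : ∀ n, Continuous (φ n)) {T : Set Z} (hT : ¬ T.Countable)
    (hT_LY : T.Pairwise (IsLiYorkePair φ)) :
    ∃ c : (ℕ → Bool) → Z, Continuous c ∧ Pairwise fun σ τ => IsLiYorkePair φ (c σ) (c τ) := by
  let := TopologicalSpace.upgradeIsCompletelyMetrizable Z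
  obtain ⟨c, hc, hcW⟩ := exists_continuous_pairwise_eventually_mem limsupEdist_comm
    limsupEdist_triangle (isOpen_liYorkeApprox hφ) hT
    (fun a ha b hb hab => pos_iff_ne_zero.mpr (hT_LY ha hb hab).2)
    fun a ha b hb n δ hδ => (hT_LY ha hb fun hab => by
      subst hab; simp [limsupEdist_self] at hδ).mem_liYorkeApprox hδ n
  refine ⟨c, hc, fun σ τ hστ => ?_⟩
  obtain ⟨δ, hδ, hev⟩ := hcW hστ
  exact isLiYorkePair_of_eventually_mem hδ hev

end LiYorke

/-- Every Li–Yorke chaotic analytic dynamical system has a scrambled Cantor set. -/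
theorem stmt_7 {X : Type*} [MetricSpace X]
    (hX : ∃ C : Set (ℕ → ℕ), IsClosed C ∧
      ∃ g : (ℕ → ℕ) → X, ContinuousOn g C ∧ g '' C = Set.univ)
    (f : X → X) (hf : Continuous f)
    (Y : Set X) (hYunc : ¬ Y.Countable) (hY : Scrambled f Y) :
    ∃ C : Set X, Nonempty ((ℕ → Bool) ≃ₜ C) ∧ Scrambled f C := by
  obtain ⟨C, hC, g, hg, hgC⟩ := hX
  have : PolishSpace C := hC.polishSpace
  obtain ⟨T, hTY, hT_inj⟩ := exists_image_eq_injOn_of_subset_range (f := C.domRestrict g)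
    (t := Y) (by rw [range_domRestrict, hgC]; exact subset_univ Y)
  obtain ⟨c, hc, hc_LY⟩ := exists_continuous_pairwise_isLiYorkePair
    (φ := fun n => f^[n] ∘ C.domRestrict g) (fun n => (hf.iterate n).comp hg.domRestrict)
    (fun h => hYunc (hTY ▸ h.image _)) fun a ha b hb hab =>
      hY _ (hTY ▸ mem_image_of_mem _ ha) _ (hTY ▸ mem_image_of_mem _ hb) (hT_inj.ne ha hb hab)
  have hinj : Function.Injective (C.domRestrict g ∘ c) := fun σ τ h =>
    not_not.mp fun hστ => (hc_LY hστ).apply_ne h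
  refine ⟨range (C.domRestrict g ∘ c),
    ⟨((hg.domRestrict.comp hc).isClosedEmbedding hinj).isEmbedding.toHomeomorph⟩, ?_⟩
  rintro _ ⟨σ, rfl⟩ _ ⟨τ, rfl⟩ hne
  exact hc_LY fun h => hne (h ▸ rfl)
end

section
/- The digraph G₀ on Cantor space has no Baire-measurable countable coloring: there is no function c : 2^ℕ → ℕ such that each fiber c⁻¹({n}) has the Baire property and is G₀-independent. -/
open Filter Topology

/-! A `G₀`-independent set `A` with the Baire property is meagre. Otherwise `A` is comeagre in
a nonempty open set, which contains a cylinder `[l]`; by density `l` extends to some `s m`, so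
`A` is comeagre in both `[s m ⌢ 0]` and `[s m ⌢ 1]`. Flipping coordinate `|s m|` is a
homeomorphism exchanging these cylinders, so `A` and its flip meet in `[s m ⌢ 0]`, which
produces a `G₀`-edge inside `A`. Cantor space, being a Baire space, is not the countable union
of the meagre fibres of a coloring. -/

open Set

def flipAt (m : ℕ) (y : ℕ → Bool) : ℕ → Bool :=
  Function.update y m (!y m)

lemma flipAt_involutive (m : ℕ) : Function.Involutive (flipAt m) := by
  intro y
  simp [flipAt]

lemma continuous_flipAt (m : ℕ) : Continuous (flipAt m) := by
  unfold flipAt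
  fun_prop

def flipAtHomeomorph (m : ℕ) : (ℕ → Bool) ≃ₜ (ℕ → Bool) where
  toEquiv := (flipAt_involutive m).toPerm
  continuous_toFun := continuous_flipAt m
  continuous_invFun := continuous_flipAt m

lemma cat01_append (l l' : List Bool) (c : ℕ → Bool) :
    cat01 (l ++ l') c = cat01 l (cat01 l' c) := by
  funext k
  simp only [cat01, List.length_append, List.get_eq_getElem]
  split_ifs <;> grind

lemma flipAt_cat01 (t : List Bool) (b : Bool) (d : ℕ → Bool) :
    flipAt t.length (cat01 (t ++ [b]) d) = cat01 (t ++ [!b]) d := by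
  funext k
  simp only [flipAt, Function.update, cat01, List.length_append, List.get_eq_getElem]
  split_ifs <;> grind

lemma range_cat01_s11 (l : List Bool) :
    range (cat01 l) = PiNat.cylinder (cat01 l fun _ => false) l.length := by
  ext y
  simp only [mem_range, PiNat.mem_cylinder_iff]
  constructor
  · rintro ⟨d, rfl⟩ i hi
    simp [cat01, hi]
  · intro hy
    refine ⟨fun k => y (k + l.length), funext fun k => ?_⟩
    by_cases hk : k < l.length
    · simp [hy k hk, cat01, hk]
    · simp [cat01, hk, Nat.sub_add_cancel (not_lt.1 hk)]

lemma isOpen_range_cat01 (l : List Bool) : IsOpen (range (cat01 l)) :=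
  range_cat01_s11 l ▸ PiNat.isOpen_cylinder _ _ _

lemma range_cat01_append_subset (l l' : List Bool) :
    range (cat01 (l ++ l')) ⊆ range (cat01 l) := by
  rintro _ ⟨c, rfl⟩
  exact ⟨_, (cat01_append l l' c).symm⟩

lemma IsOpen.exists_range_cat01_subset {U : Set (ℕ → Bool)} (hU : IsOpen U) {x : ℕ → Bool}
    (hx : x ∈ U) : ∃ l, range (cat01 l) ⊆ U := by
  obtain ⟨_, ⟨y, k, rfl⟩, hxv, hvU⟩ :=
    (PiNat.isTopologicalBasis_cylinders fun _ => Bool).exists_subset_of_mem_open hx hU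
  refine ⟨List.ofFn fun i : Fin k => y i, ?_⟩
  rintro _ ⟨d, rfl⟩
  exact hvU fun i hi => by simp [cat01, hi]

section Baire

variable {X : Type*} [TopologicalSpace X]

lemma nonempty_of_not_isMeagre_of_isMeagre_symmDiff {A U : Set X} (hA : ¬ IsMeagre A)
    (hAU : IsMeagre (symmDiff A U)) : U.Nonempty := by
  rw [nonempty_iff_ne_empty]
  rintro rfl
  rw [← bot_eq_empty, symmDiff_bot] at hAU
  exact hA hAU

variable [BaireSpace X]

lemma exists_mem_and_map_mem_of_isMeagre_symmDiff {A U V : Set X}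
    (hAU : IsMeagre (symmDiff A U)) (hV : IsOpen V) (hVne : V.Nonempty) (hVU : V ⊆ U)
    (φ : X ≃ₜ X) (hφ : MapsTo φ V U) : ∃ z ∈ V, z ∈ A ∧ φ z ∈ A := by
  have hbad : IsMeagre (symmDiff A U ∪ φ ⁻¹' symmDiff A U) :=
    hAU.union (hAU.preimage_of_isOpenMap φ.continuous φ.isOpenMap)
  obtain ⟨z, hzV, hz⟩ : (V \ (symmDiff A U ∪ φ ⁻¹' symmDiff A U)).Nonempty := by
    by_contra! h
    exact not_isMeagre_of_isOpen hV hVne (hbad.mono (sdiff_eq_empty.1 h))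
  have hmem : ∀ {x}, x ∈ U → x ∉ symmDiff A U → x ∈ A := fun hU hx => by
    by_contra hA
    exact hx (Or.inr ⟨hU, hA⟩)
  simp only [mem_union, mem_preimage, not_or] at hz
  exact ⟨z, hzV, hmem (hVU hzV) hz.1, hmem (hφ hzV) hz.2⟩

end Baire

lemma isMeagre_of_G0_independent {s : ℕ → List Bool} (hdense : ∀ l : List Bool, ∃ n, l <+: s n)
    {A : Set (ℕ → Bool)} (hBP : ∃ U, IsOpen U ∧ IsMeagre (symmDiff A U))
    (hA : ∀ x ∈ A, ∀ y ∈ A, (x, y) ∉ G0 s) : IsMeagre A := by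
  by_contra hAm
  obtain ⟨U, hU, hAU⟩ := hBP
  obtain ⟨x, hx⟩ := nonempty_of_not_isMeagre_of_isMeagre_symmDiff hAm hAU
  obtain ⟨l, hlU⟩ := hU.exists_range_cat01_subset hx
  obtain ⟨m, u, hlu⟩ := hdense l
  have hsub (b : Bool) : range (cat01 (s m ++ [b])) ⊆ U := by
    rw [← hlu, List.append_assoc]
    exact (range_cat01_append_subset l _).trans hlU
  obtain ⟨_, ⟨d, rfl⟩, hz, hφz⟩ := exists_mem_and_map_mem_of_isMeagre_symmDiff hAU
    (isOpen_range_cat01 _) (range_nonempty _) (hsub false) (flipAtHomeomorph (s m).length)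
    (by rintro _ ⟨d, rfl⟩; exact hsub true ⟨d, (flipAt_cat01 _ false d).symm⟩)
  exact hA _ hz _ hφz ⟨m, d, Prod.ext rfl (flipAt_cat01 _ false d)⟩

theorem stmt_11_general (s : ℕ → List Bool)
    (hdense : ∀ l : List Bool, ∃ n, l <+: s n) :
    ¬ ∃ c : (ℕ → Bool) → ℕ, ∀ n : ℕ,
      (∃ U : Set (ℕ → Bool), IsOpen U ∧ IsMeagre (symmDiff (c ⁻¹' {n}) U)) ∧
      (∀ x ∈ c ⁻¹' {n}, ∀ y ∈ c ⁻¹' {n}, (x, y) ∉ G0 s) := by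
  rintro ⟨c, hc⟩
  have hfibres : ∀ n, IsMeagre (c ⁻¹' {n}) := fun n =>
    isMeagre_of_G0_independent hdense (hc n).1 (hc n).2
  have huniv : IsMeagre (univ : Set (ℕ → Bool)) := by
    simpa only [← preimage_iUnion, iUnion_of_singleton, preimage_univ] using
      isMeagre_iUnion hfibres
  exact not_isMeagre_of_isOpen isOpen_univ univ_nonempty huniv

/-- `G₀` has no Baire-measurable countable coloring. -/
theorem stmt_11 (s : ℕ → List Bool)
    (hlen : ∀ n, (s n).length = n)
    (hdense : ∀ l : List Bool, ∃ n, l <+: s n) :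
    ¬ ∃ c : (ℕ → Bool) → ℕ, ∀ n : ℕ,
      (∃ U : Set (ℕ → Bool), IsOpen U ∧ IsMeagre (symmDiff (c ⁻¹' {n}) U)) ∧
      (∀ x ∈ c ⁻¹' {n}, ∀ y ∈ c ⁻¹' {n}, (x, y) ∉ G0 s) :=
  stmt_11_general s hdense
end
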